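/- If X is a T₀-space such that SI(X) (X with the irreducibly-derived topology) is a C-space, then X is Irr⁺-continuous, i.e., X is Irr-continuous and for every x ∈ X the set ↟x = {u : x ≪_Irr u} is open in X. -/
import Mathlib


universe u v w

open Set

/-- A preordered index type is a (nonempty) directed index set for nets. -/
def IsDirIdx (I : Type v) [Preorder I] : Prop :=
  Nonempty I ∧ ∀ i j : I, ∃ k, i ≤ k ∧ j ≤ k

/-- Convergence of a net with respect to a topology `t` on `X`. -/
def NetConv {X : Type u} (t : TopologicalSpace X) {I : Type v} [Preorder I]
    (net : I → X) (x : X) : Prop :=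
  ∀ U : Set X, t.IsOpen U → x ∈ U → ∃ k, ∀ i, k ≤ i → net i ∈ U

section
variable {X : Type u} [TopologicalSpace X]

/-- The specialisation order: `x ≤ y` iff `x ∈ cl {y}`. -/
def sLE (x y : X) : Prop := x ∈ closure ({y} : Set X)

/-- `b` is an upper bound of `A` in the specialisation order. -/
def IsUB (A : Set X) (b : X) : Prop := ∀ a ∈ A, sLE a b

/-- `s` is the supremum (least upper bound) of `A` in the specialisation order. -/
def IsSupSpec (A : Set X) (s : X) : Prop := IsUB A s ∧ ∀ b, IsUB A b → sLE s b

/-- The upper set `↑x` in the specialisation order. -/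
def upS (x : X) : Set X := {u | sLE x u}

/-- The lower set `↓A` in the specialisation order. -/
def downS (A : Set X) : Set X := {u | ∃ a ∈ A, sLE u a}

/-- The Irr-way-below relation: `x ≪_Irr y` iff every irreducible set `E`
whose supremum exists and dominates `y` meets `↑x`. -/
def wbIrr (x y : X) : Prop :=
  ∀ E : Set X, IsIrreducible E → ∀ s : X, IsSupSpec E s → sLE y s → (E ∩ upS x).Nonempty

/-- `↡x = {u | u ≪_Irr x}`. -/
def ddIrr (x : X) : Set X := {u | wbIrr u x}

/-- `↟x = {u | x ≪_Irr u}`. -/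
def uuIrr (x : X) : Set X := {u | wbIrr x u}

/-- A directed subset (w.r.t. the specialisation order): nonempty and every
pair of elements has an upper bound in the set. -/
def DirectedSub (D : Set X) : Prop :=
  D.Nonempty ∧ ∀ a ∈ D, ∀ b ∈ D, ∃ c ∈ D, sLE a c ∧ sLE b c

/-- `e` is an eventual lower bound of the net `net`. -/
def EvLB {I : Type v} [Preorder I] (net : I → X) (e : X) : Prop :=
  ∃ k, ∀ i, k ≤ i → sLE e (net i)

/-- Irr-convergence: the net `net` Irr-converges to `y` iff there is an
irreducible set `E` with a supremum `≥ y` consisting of eventual lower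
bounds of the net. -/
def IrrConv {I : Type v} [Preorder I] (net : I → X) (y : X) : Prop :=
  ∃ E : Set X, IsIrreducible E ∧ (∃ s, IsSupSpec E s ∧ sLE y s) ∧ ∀ e ∈ E, EvLB net e

end

/-- Sup-sobriety: every closed irreducible set having a supremum is the
closure of the singleton of its supremum. -/
def SupSober (X : Type u) [TopologicalSpace X] : Prop :=
  ∀ F : Set X, IsClosed F → IsIrreducible F → ∀ s : X, IsSupSpec F s → F = closure {s}

/-- `U` is open in the irreducibly-derived topology `τ_SI`. -/
def SIOpen {X : Type u} [TopologicalSpace X] (U : Set X) : Prop :=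
  IsOpen U ∧ ∀ E : Set X, IsIrreducible E → ∀ s : X, IsSupSpec E s → s ∈ U →
    (E ∩ U).Nonempty

/-- Interior with respect to the irreducibly-derived topology. -/
def SIint {X : Type u} [TopologicalSpace X] (A : Set X) : Set X :=
  ⋃₀ {U : Set X | SIOpen U ∧ U ⊆ A}

/-- Irr-continuity: every `↡x` is irreducible with supremum `x`. -/
def IrrCont (X : Type u) [TopologicalSpace X] : Prop :=
  ∀ x : X, IsIrreducible (ddIrr x) ∧ IsSupSpec (ddIrr x) x

/-- SI⁻-continuity: every `↡x` contains a directed subset with supremum `x`. -/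
def SImCont (X : Type u) [TopologicalSpace X] : Prop :=
  ∀ x : X, ∃ D : Set X, D ⊆ ddIrr x ∧ DirectedSub D ∧ IsSupSpec D x

/-- The `*`-property: for every irreducible `F` with a supremum there is a
directed subset of `↓F` with the same supremum. -/
def StarProp (X : Type u) [TopologicalSpace X] : Prop :=
  ∀ F : Set X, IsIrreducible F → ∀ s : X, IsSupSpec F s →
    ∃ D : Set X, D ⊆ downS F ∧ DirectedSub D ∧ IsSupSpec D s

/-- The `⊕`-property: every `↟x` is open. -/
def OplusProp (X : Type u) [TopologicalSpace X] : Prop :=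
  ∀ x : X, IsOpen (uuIrr x)

/-- C-space: for every open `U` and `x ∈ U` there is `y ∈ U` with
`x ∈ int (↑y)`. -/
def CSpace (X : Type u) [TopologicalSpace X] : Prop :=
  ∀ U : Set X, IsOpen U → ∀ x ∈ U, ∃ y ∈ U, x ∈ interior (upS y)

/-- The Irr-convergence class is topological: some topology induces it. -/
def IrrTopological (X : Type u) [TopologicalSpace X] : Prop :=
  ∃ t : TopologicalSpace X, ∀ (I : Type u) [Preorder I], IsDirIdx I →
    ∀ (net : I → X) (y : X), IrrConv net y ↔ NetConv t net y

/-- The family `τ_𝓘` of sets induced by the Irr-convergence class. -/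
def tauI (X : Type u) [TopologicalSpace X] : Set (Set X) :=
  {U | ∀ (I : Type u) [Preorder I], IsDirIdx I → ∀ (net : I → X) (y : X),
      IrrConv net y → y ∈ U → ∃ k, ∀ i, k ≤ i → net i ∈ U}

/-- Kelley's (Iterated limits) axiom for the Irr-convergence class. -/
def IterLimAxiom (X : Type u) [TopologicalSpace X] : Prop :=
  ∀ (I : Type u) [Preorder I], IsDirIdx I →
    ∀ (J : I → Type u) [∀ i, Preorder (J i)], (∀ i, IsDirIdx (J i)) →
      ∀ (xi : I → X) (xx : ∀ i, J i → X) (x : X),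
        IrrConv xi x → (∀ i, IrrConv (xx i) (xi i)) →
        IrrConv (fun p : I × (∀ i, J i) => xx p.1 (p.2 p.1)) x
section aux
variable {X : Type u} [TopologicalSpace X]

lemma sLE_refl' (x : X) : sLE x x := subset_closure rfl

lemma sLE_trans' {x y z : X} (h1 : sLE x y) (h2 : sLE y z) : sLE x z :=
  closure_minimal (Set.singleton_subset_iff.2 h2) isClosed_closure h1

lemma mem_open_of_sLE {U : Set X} (hU : IsOpen U) {x y : X} (hx : x ∈ U) (h : sLE x y) :
    y ∈ U := by
  rcases mem_closure_iff.1 h U hU hx with ⟨w, hwU, hw⟩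
  rcases hw with rfl
  exact hwU

lemma supSpec_singleton (z : X) : IsSupSpec ({z} : Set X) z := by
  constructor
  · intro a ha; rcases ha with rfl; exact sLE_refl' a
  · intro b hb; exact hb z rfl

lemma ddIrr_le {z u : X} (h : u ∈ ddIrr z) : sLE u z := by
  rcases h {z} (isIrreducible_singleton) z (supSpec_singleton z) (sLE_refl' z) with
    ⟨w, hw, hw2⟩
  rcases hw with rfl
  exact hw2

lemma SIOpen_univ : SIOpen (Set.univ : Set X) := by
  refine ⟨isOpen_univ, fun E hE s _ _ => ?_⟩
  simpa using hE.nonempty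

lemma SIOpen_inter {U V : Set X} (hU : SIOpen U) (hV : SIOpen V) : SIOpen (U ∩ V) := by
  refine ⟨hU.1.inter hV.1, fun E hE s hs hsUV => ?_⟩
  have h1 := hU.2 E hE s hs hsUV.1
  have h2 := hV.2 E hE s hs hsUV.2
  exact hE.2 U V hU.1 hV.1 h1 h2

lemma SIOpen_compl_closure (b : X) : SIOpen ((closure {b})ᶜ) := by
  refine ⟨isClosed_closure.isOpen_compl, fun E hE s hs hsU => ?_⟩
  by_contra h
  have hEsub : E ⊆ closure {b} := by
    intro a ha
    by_contra hab
    exact h ⟨a, ha, hab⟩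
  exact hsU (hs.2 b fun a ha => hEsub ha)

lemma SIOpen_SIint (A : Set X) : SIOpen (SIint A) := by
  refine ⟨isOpen_sUnion fun U hU => hU.1.1, fun E hE s hs hsU => ?_⟩
  rcases hsU with ⟨U, hU, hsU⟩
  rcases hU.1.2 E hE s hs hsU with ⟨w, hwE, hwU⟩
  exact ⟨w, hwE, U, hU, hwU⟩

lemma SIint_subset (A : Set X) : SIint A ⊆ A :=
  Set.sUnion_subset fun _ hU => hU.2

lemma isOpen_SIint (A : Set X) : IsOpen (SIint A) :=
  isOpen_sUnion fun _ hU => hU.1.1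

lemma wb_of_mem_SIint_up {y z : X} (h : z ∈ SIint (upS y)) : wbIrr y z := by
  rcases h with ⟨U, ⟨hUo, hUsub⟩, hzU⟩
  intro E hE s hs hzs
  have hsU : s ∈ U := mem_open_of_sLE hUo.1 hzU hzs
  rcases hUo.2 E hE s hs hsU with ⟨w, hwE, hwU⟩
  exact ⟨w, hwE, hUsub hwU⟩

lemma wbIrr_mono {x y z : X} (hxy : sLE x y) (h : wbIrr y z) : wbIrr x z :=
  fun E hE s hs hzs =>
    (h E hE s hs hzs).imp fun w hw => ⟨hw.1, sLE_trans' hxy hw.2⟩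

lemma directedSub_irreducible {D : Set X} (h : DirectedSub D) : IsIrreducible D := by
  refine ⟨h.1, fun U V hUo hVo hU hV => ?_⟩
  rcases hU with ⟨a, haD, haU⟩
  rcases hV with ⟨b, hbD, hbV⟩
  rcases h.2 a haD b hbD with ⟨c, hcD, hac, hbc⟩
  exact ⟨c, hcD, mem_open_of_sLE hUo haU hac, mem_open_of_sLE hVo hbV hbc⟩

/-- The auxiliary set `{y | z ∈ SIint (↑y)}`. -/
def Dz (z : X) : Set X := {y | z ∈ SIint (upS y)}

lemma Dz_sub_dd (z : X) : Dz z ⊆ ddIrr z := fun _ hy => wb_of_mem_SIint_up hy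

lemma Dz_le {z y : X} (hy : y ∈ Dz z) : sLE y z := SIint_subset (upS y) hy

variable (hC : ∀ U : Set X, SIOpen U → ∀ x ∈ U, ∃ y ∈ U, x ∈ SIint (upS y))

include hC

lemma Dz_nonempty (z : X) : (Dz z).Nonempty := by
  rcases hC Set.univ SIOpen_univ z trivial with ⟨y, _, hy⟩
  exact ⟨y, hy⟩

lemma Dz_directed (z : X) : DirectedSub (Dz z) := by
  refine ⟨Dz_nonempty hC z, fun a ha b hb => ?_⟩
  have hW : SIOpen (SIint (upS a) ∩ SIint (upS b)) :=
    SIOpen_inter (SIOpen_SIint _) (SIOpen_SIint _)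
  rcases hC _ hW z ⟨ha, hb⟩ with ⟨y, hyW, hy⟩
  exact ⟨y, hy, SIint_subset (upS a) hyW.1, SIint_subset (upS b) hyW.2⟩

lemma Dz_sup (z : X) : IsSupSpec (Dz z) z := by
  refine ⟨fun y hy => Dz_le hy, fun b hb => ?_⟩
  by_contra hzb
  rcases hC _ (SIOpen_compl_closure b) z hzb with ⟨y, hyU, hy⟩
  exact hyU (hb y hy)

end aux

/-- if `SI(X)` is a C-space then `X` is Irr⁺-continuous. -/
theorem irrContPlus_of_SI_CSpace {X : Type u} [TopologicalSpace X] [T0Space X]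
    (hC : ∀ U : Set X, SIOpen U → ∀ x ∈ U, ∃ y ∈ U, x ∈ SIint (upS y)) :
    IrrCont X ∧ OplusProp X := by
  have hDirr : ∀ z : X, IsIrreducible (Dz z) :=
    fun z => directedSub_irreducible (Dz_directed hC z)
  have hDsup : ∀ z : X, IsSupSpec (Dz z) z := Dz_sup hC
  -- every element of ↡z is below some element of Dz z
  have hbelow : ∀ z u : X, u ∈ ddIrr z → ∃ y ∈ Dz z, sLE u y := by
    intro z u hu
    rcases hu (Dz z) (hDirr z) z (hDsup z) (sLE_refl' z) with ⟨y, hyD, hy⟩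
    exact ⟨y, hyD, hy⟩
  have hdd_dir : ∀ z : X, DirectedSub (ddIrr z) := by
    intro z
    refine ⟨(Dz_nonempty hC z).imp fun y hy => Dz_sub_dd z hy, ?_⟩
    intro a ha b hb
    rcases hbelow z a ha with ⟨ya, hyaD, hya⟩
    rcases hbelow z b hb with ⟨yb, hybD, hyb⟩
    rcases (Dz_directed hC z).2 ya hyaD yb hybD with ⟨c, hcD, hac, hbc⟩
    exact ⟨c, Dz_sub_dd z hcD, sLE_trans' hya hac, sLE_trans' hyb hbc⟩
  constructor
  · intro z
    refine ⟨directedSub_irreducible (hdd_dir z), ?_⟩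
    refine ⟨fun u hu => ddIrr_le hu, fun b hb => ?_⟩
    exact (hDsup z).2 b fun y hy => hb y (Dz_sub_dd z hy)
  · intro x
    rw [isOpen_iff_forall_mem_open]
    intro z hz
    rcases hbelow z x hz with ⟨y, hyD, hxy⟩
    refine ⟨SIint (upS y), ?_, isOpen_SIint _, hyD⟩
    intro w hw
    exact wbIrr_mono hxy (wb_of_mem_SIint_up hw)
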